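/- arXiv:1012.3921 — 4 statements merged into one kernel-verified Lean document; each statement's English description precedes it below -/
import Mathlib

section
/- For the potential V_s(x) = -sech²(x+s) - sech²(-x+s) with 0 ≤ s ≤ s* := (1/2)·arccosh(2), the derivative satisfies V_s'(x) > 0 for all x > 0; that is, V_s is strictly increasing on (0,∞). -/
open Real

noncomputable def arccosh (x : ℝ) : ℝ := Real.log (x + Real.sqrt (x ^ 2 - 1))

noncomputable def sech (x : ℝ) : ℝ := 1 / Real.cosh x

noncomputable def Vpot (s x : ℝ) : ℝ := -(sech (x + s)) ^ 2 - (sech (-x + s)) ^ 2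

/-!
With `a = x + s`, `b = x - s` one has
`V_s'(x) = 2 (sinh a cosh³ b + sinh b cosh³ a) / (cosh³ a cosh³ b)`, and the numerator factors as
`sinh 2x · (2 + cosh 2x cosh 2s - cosh² 2s)`. For `x > 0` the first factor is positive and
`cosh 2x > 1`, so with `c = cosh 2s` the bracket exceeds `2 + c - c² = (2 - c)(1 + c)`, which is
nonnegative exactly when `cosh 2s ≤ 2`, i.e. `s ≤ arccosh 2 / 2`.
-/

theorem cosh_arccosh {x : ℝ} (hx : 1 ≤ x) : cosh (arccosh x) = x := by
  have hsq : √(x ^ 2 - 1) ^ 2 = x ^ 2 - 1 := sq_sqrt (by nlinarith)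
  have hpos : 0 < x + √(x ^ 2 - 1) := by positivity
  rw [arccosh, cosh_log hpos]
  field_simp
  linear_combination hsq

theorem cosh_two_mul_le_of_le_half_arccosh {s y : ℝ} (hy : 1 ≤ y) (hs0 : 0 ≤ s)
    (hs : s ≤ 1 / 2 * arccosh y) : cosh (2 * s) ≤ y := by
  calc cosh (2 * s) ≤ cosh (arccosh y) := by
        rw [cosh_le_cosh, abs_of_nonneg (by positivity)]
        exact (by linarith : 2 * s ≤ arccosh y).trans (le_abs_self _)
    _ = y := cosh_arccosh hy

theorem sinh_mul_cosh_pow_three_add_sinh_mul_cosh_pow_three (a b : ℝ) :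
    2 * (sinh a * cosh b ^ 3 + sinh b * cosh a ^ 3) =
      sinh (a + b) * (2 + cosh (a + b) * cosh (a - b) - cosh (a - b) ^ 2) := by
  rw [sinh_add, cosh_add, cosh_sub]
  linear_combination 2 * (sinh a * cosh b - sinh a ^ 2 * cosh a * sinh b) * cosh_sq_sub_sinh_sq b +
    2 * (sinh b * cosh a - sinh a * cosh b * sinh b ^ 2) * cosh_sq_sub_sinh_sq a

theorem sech_neg (x : ℝ) : sech (-x) = sech x := by
  rw [sech, sech, cosh_neg]

theorem hasDerivAt_sech_sq (x : ℝ) :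
    HasDerivAt (fun y ↦ sech y ^ 2) (-2 * sinh x / cosh x ^ 3) x := by
  have hc := (cosh_pos x).ne'
  have h := ((hasDerivAt_cosh x).fun_inv hc).fun_pow 2
  simp only [sech, one_div]
  refine h.congr_deriv ?_
  norm_num
  field_simp

theorem Vpot_eq_neg_sech_sq_sub_sech_sq (s : ℝ) :
    Vpot s = fun x ↦ -sech (x + s) ^ 2 - sech (x - s) ^ 2 := by
  ext x
  rw [Vpot, ← sech_neg (x - s), neg_sub, neg_add_eq_sub]

theorem hasDerivAt_Vpot (s x : ℝ) :
    HasDerivAt (Vpot s) (sinh (2 * x) * (2 + cosh (2 * x) * cosh (2 * s) - cosh (2 * s) ^ 2) /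
      (cosh (x - s) ^ 3 * cosh (x + s) ^ 3)) x := by
  have h := ((hasDerivAt_sech_sq (x + s)).comp_add_const x s).neg.sub
    ((hasDerivAt_sech_sq (x - s)).comp_sub_const x s)
  rw [Vpot_eq_neg_sech_sq_sub_sech_sq]
  refine h.congr_deriv ?_
  have := (cosh_pos (x + s)).ne'
  have := (cosh_pos (x - s)).ne'
  rw [show 2 * x = (x + s) + (x - s) by ring, show 2 * s = (x + s) - (x - s) by ring,
    ← sinh_mul_cosh_pow_three_add_sinh_mul_cosh_pow_three]
  field_simp
  ring

theorem two_add_mul_sub_sq_pos {u c : ℝ} (hu : 1 < u) (hc0 : 0 < c) (hc2 : c ≤ 2) :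
    0 < 2 + u * c - c ^ 2 := by
  nlinarith [mul_lt_mul_of_pos_right hu hc0,
    mul_nonneg (sub_nonneg.2 hc2) (by linarith : 0 ≤ 1 + c)]

theorem deriv_Vpot_pos {s x : ℝ} (hs : cosh (2 * s) ≤ 2) (hx : 0 < x) :
    0 < deriv (Vpot s) x := by
  rw [(hasDerivAt_Vpot s x).deriv]
  have hsinh : 0 < sinh (2 * x) := sinh_pos_iff.2 (by positivity)
  have hcosh : 1 < cosh (2 * x) := one_lt_cosh.2 (by positivity)
  have := two_add_mul_sub_sq_pos hcosh (cosh_pos (2 * s)) hs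
  positivity

/-- For `0 ≤ s ≤ s* = arccosh 2 / 2`, the potential `V_s` has positive derivative
for all `x > 0`, i.e. it is strictly increasing on `(0, ∞)`. -/
theorem stmt0 (s : ℝ) (hs0 : 0 ≤ s) (hs1 : s ≤ (1 / 2) * arccosh 2) :
    (∀ x : ℝ, 0 < x → 0 < deriv (Vpot s) x) ∧
      StrictMonoOn (Vpot s) (Set.Ioi (0 : ℝ)) := by
  have hs : cosh (2 * s) ≤ 2 := cosh_two_mul_le_of_le_half_arccosh one_le_two hs0 hs1
  have hderiv : ∀ x : ℝ, 0 < x → 0 < deriv (Vpot s) x := fun _ hx ↦ deriv_Vpot_pos hs hx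
  refine ⟨hderiv, strictMonoOn_of_deriv_pos (convex_Ioi 0) ?_ ?_⟩
  · exact fun x _ ↦ (hasDerivAt_Vpot s x).continuousAt.continuousWithinAt
  · simpa only [interior_Ioi, Set.mem_Ioi] using hderiv
end

section
/- Pohozaev-type identity: if φ ∈ H²(ℝ) is a real solution of -φ'' + V(x)φ + σ|φ|^{2p}φ + Eφ = 0 with V ∈ L^∞, x·V'(x) ∈ L^∞, V differentiable a.e., and φ decays so that all boundary terms vanish, then -‖φ'‖²_{L²} + ∫ (V(x) + xV'(x))|φ(x)|² dx + (σ/(p+1))‖φ‖_{L^{2p+2}}^{2p+2} = -E‖φ‖²_{L²}. -/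
/-!
Pair the equation with `x φ'`. Multiplying by `2 φ'` shows that the energy density
`e = -(φ')² + Vφ² + (σ/(p+1))|φ|^{2p+2} + Eφ²` satisfies `e' = V'φ²`, so the virial flux
`x e` has derivative `e + x V' φ²`, which is the integrand of the identity. The flux is bounded
by a multiple of the boundary terms and hence vanishes at `±∞`, so the integrand integrates to
zero.
-/

open Real MeasureTheory Filter

lemma Real.abs_rpow_two_mul (t q : ℝ) : |t| ^ (2 * q) = (t ^ 2) ^ q := by
  rw [Real.rpow_mul (abs_nonneg t), Real.rpow_two, sq_abs]

lemma HasDerivAt.abs_rpow_two_mul_add_two {u : ℝ → ℝ} {u' x q : ℝ} (hu : HasDerivAt u u' x)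
    (hq : 0 ≤ q) :
    HasDerivAt (fun y => |u y| ^ (2 * q + 2)) ((2 * q + 2) * |u x| ^ (2 * q) * u x * u') x := by
  have hpow := (hu.fun_pow 2).rpow_const (p := q + 1) (Or.inr (by linarith))
  simp only [show 2 * q + 2 = 2 * (q + 1) by ring, Real.abs_rpow_two_mul]
  convert hpow using 1
  rw [add_sub_cancel_right]
  push_cast
  ring

section Pohozaev

variable (p σ E : ℝ) (V φ : ℝ → ℝ)

noncomputable def pohozaevDensity (x : ℝ) : ℝ :=
  -(deriv φ x) ^ 2 + V x * (φ x) ^ 2 + σ / (p + 1) * |φ x| ^ (2 * p + 2) + E * (φ x) ^ 2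

variable {p σ E V φ}

lemma hasDerivAt_pohozaevDensity (hp : 0 ≤ p) (hVdiff : Differentiable ℝ V)
    (hφ : ContDiff ℝ 2 φ)
    (hsol : ∀ x, -(deriv (deriv φ) x) + V x * φ x + σ * |φ x| ^ (2 * p) * φ x + E * φ x = 0)
    (x : ℝ) :
    HasDerivAt (pohozaevDensity p σ E V φ) (deriv V x * (φ x) ^ 2) x := by
  have hφ' : HasDerivAt φ (deriv φ x) x := (hφ.differentiable (by norm_num) x).hasDerivAt
  have hφ'' : HasDerivAt (deriv φ) (deriv (deriv φ) x) x :=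
    ((hφ.iterate_deriv' 1 1).differentiable (by norm_num) x).hasDerivAt
  have hdens := (((hφ''.fun_pow 2).neg.add ((hVdiff x).hasDerivAt.mul (hφ'.fun_pow 2))).add
    ((hφ'.abs_rpow_two_mul_add_two hp).const_mul (σ / (p + 1)))).add
    ((hφ'.fun_pow 2).const_mul E)
  have hcoef : σ / (p + 1) * (2 * p + 2) = 2 * σ := by field_simp
  exact hdens.congr_deriv (by
    push_cast
    linear_combination (2 * deriv φ x) * hsol x
      + (|φ x| ^ (2 * p) * φ x * deriv φ x) * hcoef)

lemma hasDerivAt_mul_pohozaevDensity (hp : 0 ≤ p) (hVdiff : Differentiable ℝ V)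
    (hφ : ContDiff ℝ 2 φ)
    (hsol : ∀ x, -(deriv (deriv φ) x) + V x * φ x + σ * |φ x| ^ (2 * p) * φ x + E * φ x = 0)
    (x : ℝ) :
    HasDerivAt (fun y => y * pohozaevDensity p σ E V φ y)
      (-(deriv φ x) ^ 2 + (V x + x * deriv V x) * (φ x) ^ 2
        + σ / (p + 1) * |φ x| ^ (2 * p + 2) + E * (φ x) ^ 2) x := by
  refine ((hasDerivAt_id' x).mul (hasDerivAt_pohozaevDensity hp hVdiff hφ hsol x)).congr_deriv ?_
  unfold pohozaevDensity
  ring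

lemma abs_pohozaevDensity_le (x : ℝ) :
    |pohozaevDensity p σ E V φ x| ≤ (1 + |σ / (p + 1)| + |E|)
      * ((deriv φ x) ^ 2 + (φ x) ^ 2 + |φ x| ^ (2 * p + 2) + |V x| * (φ x) ^ 2) := by
  set c := σ / (p + 1)
  have hA : 0 ≤ |φ x| ^ (2 * p + 2) := Real.rpow_nonneg (abs_nonneg _) _
  have hB : 0 ≤ |V x| * (φ x) ^ 2 := mul_nonneg (abs_nonneg _) (sq_nonneg _)
  have hc := abs_nonneg c
  have hE := abs_nonneg E
  calc |pohozaevDensity p σ E V φ x|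
      ≤ |(deriv φ x) ^ 2| + |V x * (φ x) ^ 2| + |c * |φ x| ^ (2 * p + 2)|
          + |E * (φ x) ^ 2| := by
        unfold pohozaevDensity
        rw [← abs_neg ((deriv φ x) ^ 2)]
        exact (abs_add_le _ _).trans (by
          gcongr; exact (abs_add_le _ _).trans (by gcongr; exact abs_add_le _ _))
    _ = (deriv φ x) ^ 2 + |V x| * (φ x) ^ 2 + |c| * |φ x| ^ (2 * p + 2) + |E| * (φ x) ^ 2 := by
        rw [abs_mul, abs_mul, abs_mul, abs_of_nonneg hA, abs_sq, abs_sq]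
    _ ≤ _ := by
        nlinarith [sq_nonneg (deriv φ x), sq_nonneg (φ x), mul_nonneg hc hB, mul_nonneg hE hB,
          mul_nonneg hc (sq_nonneg (φ x)), mul_nonneg hc (sq_nonneg (deriv φ x)),
          mul_nonneg hE hA, mul_nonneg hE (sq_nonneg (deriv φ x))]

lemma tendsto_mul_pohozaevDensity {l : Filter ℝ}
    (hbdry : Tendsto (fun x : ℝ =>
      x * ((deriv φ x) ^ 2 + (φ x) ^ 2 + |φ x| ^ (2 * p + 2) + |V x| * (φ x) ^ 2)) l (nhds 0)) :
    Tendsto (fun x => x * pohozaevDensity p σ E V φ x) l (nhds 0) := by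
  refine squeeze_zero_norm (fun x => ?_)
    ((hbdry.norm.const_mul (1 + |σ / (p + 1)| + |E|)).trans_eq (by simp))
  rw [norm_mul, norm_mul, Real.norm_eq_abs, Real.norm_eq_abs, mul_left_comm]
  exact mul_le_mul_of_nonneg_left ((abs_pohozaevDensity_le x).trans
    (mul_le_mul_of_nonneg_left (le_abs_self _) (by positivity))) (abs_nonneg x)

end Pohozaev

theorem stmt4_general (p σ E : ℝ) (hp : 0 < p)
    (V φ : ℝ → ℝ)
    (hVdiff : Differentiable ℝ V)
    (hφ : ContDiff ℝ 2 φ)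
    (hsol : ∀ x, -(deriv (deriv φ) x) + V x * φ x + σ * |φ x| ^ (2 * p) * φ x
      + E * φ x = 0)
    (hint1 : Integrable (fun x => (deriv φ x) ^ 2))
    (hint2 : Integrable (fun x => (φ x) ^ 2))
    (hint3 : Integrable (fun x => |φ x| ^ (2 * p + 2)))
    (hint4 : Integrable (fun x => (V x + x * deriv V x) * (φ x) ^ 2))
    (hbdryTop : Tendsto (fun x : ℝ =>
      x * ((deriv φ x) ^ 2 + (φ x) ^ 2 + |φ x| ^ (2 * p + 2) + |V x| * (φ x) ^ 2))
      atTop (nhds 0))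
    (hbdryBot : Tendsto (fun x : ℝ =>
      x * ((deriv φ x) ^ 2 + (φ x) ^ 2 + |φ x| ^ (2 * p + 2) + |V x| * (φ x) ^ 2))
      atBot (nhds 0)) :
    -(∫ x, (deriv φ x) ^ 2) + (∫ x, (V x + x * deriv V x) * (φ x) ^ 2)
      + (σ / (p + 1)) * ∫ x, |φ x| ^ (2 * p + 2)
      = -E * ∫ x, (φ x) ^ 2 := by
  have hint1neg : Integrable (fun x => -(deriv φ x) ^ 2) := hint1.neg
  have hint12 : Integrable (fun x => -(deriv φ x) ^ 2 + (V x + x * deriv V x) * (φ x) ^ 2) :=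
    hint1neg.add hint4
  have hint123 : Integrable (fun x => -(deriv φ x) ^ 2 + (V x + x * deriv V x) * (φ x) ^ 2
      + σ / (p + 1) * |φ x| ^ (2 * p + 2)) :=
    hint12.add (hint3.const_mul (σ / (p + 1)))
  have hzero := integral_of_hasDerivAt_of_tendsto
    (hasDerivAt_mul_pohozaevDensity hp.le hVdiff hφ hsol) (hint123.add (hint2.const_mul E))
    (tendsto_mul_pohozaevDensity hbdryBot) (tendsto_mul_pohozaevDensity hbdryTop)
  rw [integral_add hint123 (hint2.const_mul E), integral_add hint12 (hint3.const_mul _),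
    integral_add hint1neg hint4, integral_neg, integral_const_mul, integral_const_mul] at hzero
  linarith

/-- Pohozaev-type identity: if `φ ∈ H²(ℝ)` is a real solution of
`-φ'' + Vφ + σ|φ|^{2p}φ + Eφ = 0` with `V ∈ L^∞`, `xV'(x) ∈ L^∞`, `V` differentiable,
and `φ` decays so that all boundary terms vanish, then
`-‖φ'‖² + ∫ (V + xV')|φ|² + (σ/(p+1))‖φ‖_{2p+2}^{2p+2} = -E‖φ‖²`. -/
theorem stmt4 (p σ E : ℝ) (hp : 0 < p)
    (V φ : ℝ → ℝ)
    (hVdiff : Differentiable ℝ V)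
    (hVbdd : ∃ M : ℝ, ∀ x, |V x| ≤ M)
    (hxV'bdd : ∃ M : ℝ, ∀ x, |x * deriv V x| ≤ M)
    (hφ : ContDiff ℝ 2 φ)
    (hsol : ∀ x, -(deriv (deriv φ) x) + V x * φ x + σ * |φ x| ^ (2 * p) * φ x
      + E * φ x = 0)
    (hint1 : Integrable (fun x => (deriv φ x) ^ 2))
    (hint2 : Integrable (fun x => (φ x) ^ 2))
    (hint3 : Integrable (fun x => |φ x| ^ (2 * p + 2)))
    (hint4 : Integrable (fun x => (V x + x * deriv V x) * (φ x) ^ 2))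
    (hbdryTop : Tendsto (fun x : ℝ =>
      x * ((deriv φ x) ^ 2 + (φ x) ^ 2 + |φ x| ^ (2 * p + 2) + |V x| * (φ x) ^ 2))
      atTop (nhds 0))
    (hbdryBot : Tendsto (fun x : ℝ =>
      x * ((deriv φ x) ^ 2 + (φ x) ^ 2 + |φ x| ^ (2 * p + 2) + |V x| * (φ x) ^ 2))
      atBot (nhds 0)) :
    -(∫ x, (deriv φ x) ^ 2) + (∫ x, (V x + x * deriv V x) * (φ x) ^ 2)
      + (σ / (p + 1)) * ∫ x, |φ x| ^ (2 * p + 2)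
      = -E * ∫ x, (φ x) ^ 2 :=
  stmt4_general p σ E hp V φ hVdiff hφ hsol hint1 hint2 hint3 hint4 hbdryTop hbdryBot
end

section
/- With C := 2‖V‖_∞ + ‖xV'‖_∞, any real H² solution φ of the stationary NLS satisfies the two-sided bound 2(E - C)‖φ‖²_{L²} ≤ -σ·((p+2)/(p+1))·‖φ‖_{L^{2p+2}}^{2p+2} ≤ 2(E + C)‖φ‖²_{L²}. -/
open Real MeasureTheory Filter

/-! Up to `(p + 1) (φ - 2 x φ')` times the equation (the Nehari multiplier `φ` combined with the
Pohozaev multiplier `x φ'`), `(p + 1) ((2V + xV') φ² + 2Eφ²) + (p + 2) σ |φ|^{2p+2}` is the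
derivative of `pohozaevFlux`. The flux vanishes at `±∞`, so integrating gives
`2E‖φ‖² + ∫ (2V + xV') φ² = -σ (p+2)/(p+1) ‖φ‖_{2p+2}^{2p+2}`, and the weight `2V + xV'` is
bounded by `C`. -/

theorem abs_integral_mul_le {α : Type*} [MeasurableSpace α] {μ : Measure α} {w f : α → ℝ}
    {C : ℝ} (hw : ∀ x, |w x| ≤ C) (hf : Integrable f μ) (hf0 : ∀ x, 0 ≤ f x) :
    |∫ x, w x * f x ∂μ| ≤ C * ∫ x, f x ∂μ := by
  rw [← integral_const_mul, ← Real.norm_eq_abs]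
  refine norm_integral_le_of_norm_le (hf.const_mul C) (ae_of_all _ fun x => ?_)
  rw [norm_mul, Real.norm_eq_abs, Real.norm_of_nonneg (hf0 x)]
  exact mul_le_mul_of_nonneg_right (hw x) (hf0 x)

noncomputable def pohozaevFlux (p σ E : ℝ) (V φ : ℝ → ℝ) (x : ℝ) : ℝ :=
  (p + 1) * (φ x * deriv φ x + x * (V x + E) * φ x ^ 2 - x * deriv φ x ^ 2)
    + σ * x * |φ x| ^ (2 * p + 2)

section Pohozaev

variable {p σ E : ℝ} {V φ : ℝ → ℝ}

theorem hasDerivAt_pohozaevFlux (hp : -1 / 2 < p) {x : ℝ} (hV : DifferentiableAt ℝ V x)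
    (hφ : DifferentiableAt ℝ φ x) (hφ' : DifferentiableAt ℝ (deriv φ) x)
    (hsol : -deriv (deriv φ) x + V x * φ x + σ * |φ x| ^ (2 * p) * φ x + E * φ x = 0) :
    HasDerivAt (pohozaevFlux p σ E V φ)
      ((p + 1) * ((2 * V x + x * deriv V x) * φ x ^ 2 + 2 * E * φ x ^ 2)
        + (p + 2) * σ * |φ x| ^ (2 * p + 2)) x := by
  have hpow : HasDerivAt (fun y => |φ y| ^ (2 * p + 2))
      ((2 * p + 2) * |φ x| ^ (2 * p) * φ x * deriv φ x) x := by
    have h := (hasDerivAt_abs_rpow (φ x) (by linarith : (1 : ℝ) < 2 * p + 2)).comp x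
      hφ.hasDerivAt
    rwa [add_sub_cancel_right] at h
  have hsplit : |φ x| ^ (2 * p + 2) = |φ x| ^ (2 * p) * φ x ^ 2 := by
    rw [rpow_add' (abs_nonneg _) (by linarith), rpow_two, sq_abs]
  have hx := hasDerivAt_id' x
  have h := ((((hφ.hasDerivAt.mul hφ'.hasDerivAt).add
      ((hx.mul (hV.hasDerivAt.add_const E)).mul (hφ.hasDerivAt.pow 2))).sub
      (hx.mul (hφ'.hasDerivAt.pow 2))).const_mul (p + 1)).add ((hx.const_mul σ).mul hpow)
  refine h.congr_deriv ?_
  simp only [Pi.mul_apply, Pi.pow_apply]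
  linear_combination (-(p + 1) * (φ x - 2 * x * deriv φ x)) * hsol - (p + 1) * σ * hsplit

theorem abs_pohozaevFlux_le (x : ℝ) :
    |pohozaevFlux p σ E V φ x| ≤ (|p + 1| * (1 + |E|) + |σ|) * (|φ x * deriv φ x|
      + |x| * (deriv φ x ^ 2 + φ x ^ 2 + |φ x| ^ (2 * p + 2) + |V x| * φ x ^ 2)) := by
  have hr : 0 ≤ |φ x| ^ (2 * p + 2) := by positivity
  have hpot : |x * (V x + E) * φ x ^ 2| ≤ |x| * (|V x| + |E|) * φ x ^ 2 := by
    rw [abs_mul, abs_mul, abs_sq]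
    gcongr
    exact abs_add_le _ _
  have hkin : |x * deriv φ x ^ 2| = |x| * deriv φ x ^ 2 := by
    rw [abs_mul, abs_sq]
  have hnl : |σ * x * |φ x| ^ (2 * p + 2)| = |σ| * (|x| * |φ x| ^ (2 * p + 2)) := by
    rw [abs_mul, abs_mul, abs_of_nonneg hr, mul_assoc]
  have hslack : 0 ≤ (|p + 1| * |E| + |σ|) * |φ x * deriv φ x| + |x| * (|p + 1| * (φ x ^ 2
      + |φ x| ^ (2 * p + 2)) + |p + 1| * |E| * (deriv φ x ^ 2 + |φ x| ^ (2 * p + 2)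
      + |V x| * φ x ^ 2) + |σ| * (deriv φ x ^ 2 + φ x ^ 2 + |V x| * φ x ^ 2)) := by positivity
  unfold pohozaevFlux
  calc _ ≤ |p + 1| * (|φ x * deriv φ x| + |x * (V x + E) * φ x ^ 2| + |x * deriv φ x ^ 2|)
        + |σ * x * |φ x| ^ (2 * p + 2)| := by
        refine (abs_add_le _ _).trans ?_
        rw [abs_mul]
        gcongr
        exact (abs_sub _ _).trans (by gcongr; exact abs_add_le _ _)
    _ ≤ |p + 1| * (|φ x * deriv φ x| + |x| * (|V x| + |E|) * φ x ^ 2 + |x| * deriv φ x ^ 2)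
        + |σ| * (|x| * |φ x| ^ (2 * p + 2)) := by
        rw [hkin, hnl]
        gcongr
    _ ≤ _ := by linear_combination hslack

theorem tendsto_pohozaevFlux_zero {l : Filter ℝ} (h : Tendsto (fun x => |φ x * deriv φ x|
      + |x| * (deriv φ x ^ 2 + φ x ^ 2 + |φ x| ^ (2 * p + 2) + |V x| * φ x ^ 2)) l (nhds 0)) :
    Tendsto (pohozaevFlux p σ E V φ) l (nhds 0) :=
  squeeze_zero_norm abs_pohozaevFlux_le (by simpa only [mul_zero] using h.const_mul _)

theorem pohozaev_identity (hp : -1 / 2 < p) (hV : Differentiable ℝ V) (hφ : ContDiff ℝ 2 φ)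
    (hsol : ∀ x, -deriv (deriv φ) x + V x * φ x + σ * |φ x| ^ (2 * p) * φ x + E * φ x = 0)
    (hφ2 : Integrable (fun x => φ x ^ 2))
    (hφq : Integrable (fun x => |φ x| ^ (2 * p + 2)))
    (hVφ : Integrable (fun x => (2 * V x + x * deriv V x) * φ x ^ 2))
    (htop : Tendsto (fun x => |φ x * deriv φ x|
      + |x| * (deriv φ x ^ 2 + φ x ^ 2 + |φ x| ^ (2 * p + 2) + |V x| * φ x ^ 2)) atTop (nhds 0))
    (hbot : Tendsto (fun x => |φ x * deriv φ x|
      + |x| * (deriv φ x ^ 2 + φ x ^ 2 + |φ x| ^ (2 * p + 2) + |V x| * φ x ^ 2)) atBot (nhds 0)) :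
    (p + 1) * ((∫ x, (2 * V x + x * deriv V x) * φ x ^ 2) + 2 * E * ∫ x, φ x ^ 2)
      + (p + 2) * σ * ∫ x, |φ x| ^ (2 * p + 2) = 0 := by
  have hφ' : Differentiable ℝ (deriv φ) :=
    (hφ.iterate_deriv' 1 1).differentiable one_ne_zero
  have hquad : Integrable fun x => (p + 1) * ((2 * V x + x * deriv V x) * φ x ^ 2
      + 2 * E * φ x ^ 2) := (hVφ.add (hφ2.const_mul (2 * E))).const_mul (p + 1)
  have hnl := hφq.const_mul ((p + 2) * σ)
  have h := integral_of_hasDerivAt_of_tendsto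
    (fun x => hasDerivAt_pohozaevFlux hp (hV x) (hφ.differentiable two_ne_zero x) (hφ' x) (hsol x))
    (hquad.add hnl) (tendsto_pohozaevFlux_zero hbot) (tendsto_pohozaevFlux_zero htop)
  rwa [integral_add hquad hnl, integral_const_mul, integral_add hVφ (hφ2.const_mul _),
    integral_const_mul, integral_const_mul, sub_self] at h

end Pohozaev

theorem stmt7_general (p σ E MV MxV : ℝ) (hp : 0 < p)
    (V φ : ℝ → ℝ)
    (hVdiff : Differentiable ℝ V)
    (hVbdd : ∀ x, |V x| ≤ MV)
    (hxV'bdd : ∀ x, |x * deriv V x| ≤ MxV)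
    (hφ : ContDiff ℝ 2 φ)
    (hsol : ∀ x, -(deriv (deriv φ) x) + V x * φ x + σ * |φ x| ^ (2 * p) * φ x
      + E * φ x = 0)
    (hint2 : Integrable (fun x => (φ x) ^ 2))
    (hint3 : Integrable (fun x => |φ x| ^ (2 * p + 2)))
    (hint4 : Integrable (fun x => (2 * V x + x * deriv V x) * (φ x) ^ 2))
    (hbdryTop : Tendsto (fun x : ℝ =>
      |φ x * deriv φ x| + |x| * ((deriv φ x) ^ 2 + (φ x) ^ 2 + |φ x| ^ (2 * p + 2)
        + |V x| * (φ x) ^ 2)) atTop (nhds 0))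
    (hbdryBot : Tendsto (fun x : ℝ =>
      |φ x * deriv φ x| + |x| * ((deriv φ x) ^ 2 + (φ x) ^ 2 + |φ x| ^ (2 * p + 2)
        + |V x| * (φ x) ^ 2)) atBot (nhds 0)) :
    2 * (E - (2 * MV + MxV)) * (∫ x, (φ x) ^ 2)
      ≤ -σ * ((p + 2) / (p + 1)) * (∫ x, |φ x| ^ (2 * p + 2)) ∧
    -σ * ((p + 2) / (p + 1)) * (∫ x, |φ x| ^ (2 * p + 2))
      ≤ 2 * (E + (2 * MV + MxV)) * (∫ x, (φ x) ^ 2) := by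
  have hpohozaev := pohozaev_identity (by linarith) hVdiff hφ hsol hint2 hint3 hint4
    hbdryTop hbdryBot
  have hweight : |∫ x, (2 * V x + x * deriv V x) * φ x ^ 2| ≤ (2 * MV + MxV) * ∫ x, φ x ^ 2 :=
    abs_integral_mul_le (fun x => (abs_add_le _ _).trans <| by
      rw [abs_mul, abs_two]; linarith [hVbdd x, hxV'bdd x]) hint2 (fun x => sq_nonneg (φ x))
  have hcombined : -σ * ((p + 2) / (p + 1)) * ∫ x, |φ x| ^ (2 * p + 2)
      = 2 * E * (∫ x, φ x ^ 2) + ∫ x, (2 * V x + x * deriv V x) * φ x ^ 2 := by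
    calc _ = -((p + 2) * σ * ∫ x, |φ x| ^ (2 * p + 2)) / (p + 1) := by ring
      _ = _ := by
        rw [div_eq_iff (by positivity)]
        linear_combination -hpohozaev
  rw [hcombined]
  constructor <;> linarith [abs_le.mp hweight]

/-- With `C = 2‖V‖_∞ + ‖xV'‖_∞`, any real `H²` solution `φ` of the stationary NLS
satisfies `2(E-C)‖φ‖² ≤ -σ (p+2)/(p+1) ‖φ‖_{2p+2}^{2p+2} ≤ 2(E+C)‖φ‖²`. -/
theorem stmt7 (p σ E MV MxV : ℝ) (hp : 0 < p) (hσ : σ < 0)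
    (V φ : ℝ → ℝ)
    (hVdiff : Differentiable ℝ V)
    (hVbdd : ∀ x, |V x| ≤ MV)
    (hxV'bdd : ∀ x, |x * deriv V x| ≤ MxV)
    (hφ : ContDiff ℝ 2 φ)
    (hsol : ∀ x, -(deriv (deriv φ) x) + V x * φ x + σ * |φ x| ^ (2 * p) * φ x
      + E * φ x = 0)
    (hint1 : Integrable (fun x => (deriv φ x) ^ 2))
    (hint2 : Integrable (fun x => (φ x) ^ 2))
    (hint3 : Integrable (fun x => |φ x| ^ (2 * p + 2)))
    (hint4 : Integrable (fun x => (2 * V x + x * deriv V x) * (φ x) ^ 2))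
    (hbdryTop : Tendsto (fun x : ℝ =>
      |φ x * deriv φ x| + |x| * ((deriv φ x) ^ 2 + (φ x) ^ 2 + |φ x| ^ (2 * p + 2)
        + |V x| * (φ x) ^ 2)) atTop (nhds 0))
    (hbdryBot : Tendsto (fun x : ℝ =>
      |φ x * deriv φ x| + |x| * ((deriv φ x) ^ 2 + (φ x) ^ 2 + |φ x| ^ (2 * p + 2)
        + |V x| * (φ x) ^ 2)) atBot (nhds 0)) :
    2 * (E - (2 * MV + MxV)) * (∫ x, (φ x) ^ 2)
      ≤ -σ * ((p + 2) / (p + 1)) * (∫ x, |φ x| ^ (2 * p + 2)) ∧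
    -σ * ((p + 2) / (p + 1)) * (∫ x, |φ x| ^ (2 * p + 2))
      ≤ 2 * (E + (2 * MV + MxV)) * (∫ x, (φ x) ^ 2) :=
  stmt7_general p σ E MV MxV hp V φ hVdiff hVbdd hxV'bdd hφ hsol hint2 hint3 hint4 hbdryTop hbdryBot
end

section
/- Let σ < 0 and let (ψ_E, E) for E ∈ (E₀, E_*) be a branch of positive solutions of the stationary NLS such that the lowest eigenvalue λ₀(E) of L_+(ψ_E, E) tends to 0 along a sequence Eₙ → E_*. Then ‖ψ_{Eₙ}‖_{L^{2p+2}}^{2p+2}/‖ψ_{Eₙ}‖²_{L²} → 0, and consequently E_* ≤ E₀, where -E₀ is the lowest eigenvalue of -∂ₓ² + V. -/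
open Real MeasureTheory Filter

/-!
Write `N = ‖ψ_E‖₂²` and `I = ‖ψ_E‖_{2p+2}^{2p+2}`. Multiplying the equation by `ψ_E` and
integrating by parts gives `‖ψ_E'‖₂² + ⟨Vψ_E, ψ_E⟩ + σ I + E N = 0`. Inserting this into the
Rayleigh bound for `λ₀(E)` leaves `λ₀(E) N ≤ 2pσ I`, so `0 ≤ I/N ≤ λ₀(E)/(2pσ) → 0` because
`2pσ < 0`. Inserting it into the Rayleigh bound for `-∂ₓ² + V` gives `E ≤ E₀ - σ I/N`, and
letting `E = Eₙ → E_*` yields `E_* ≤ E₀`.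
-/

theorem Real.abs_rpow_mul_sq (a r : ℝ) (hr : r + 2 ≠ 0) : |a| ^ r * a ^ 2 = |a| ^ (r + 2) := by
  rw [rpow_add' (abs_nonneg a) hr, ← sq_abs a]
  norm_cast

theorem integral_mul_deriv_deriv_eq_neg {f : ℝ → ℝ} (hf : ContDiff ℝ 2 f)
    (hf' : Integrable fun x => deriv f x ^ 2)
    (hff'' : Integrable fun x => f x * deriv (deriv f) x)
    (hbot : Tendsto (fun x => f x * deriv f x) atBot (nhds 0))
    (htop : Tendsto (fun x => f x * deriv f x) atTop (nhds 0)) :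
    ∫ x, f x * deriv (deriv f) x = -∫ x, deriv f x ^ 2 := by
  have hf'diff : Differentiable ℝ (deriv f) :=
    (hf.iterate_deriv' 1 1).differentiable one_ne_zero
  rw [integral_mul_deriv_eq_deriv_mul (u' := deriv f)
    (fun x _ => (hf.differentiable two_ne_zero x).hasDerivAt)
    (fun x _ => (hf'diff x).hasDerivAt) hff'' (hf'.congr (.of_forall fun x => sq _)) hbot htop]
  simp [sq]

section StationaryNLS

variable {p c E : ℝ} {V f : ℝ → ℝ}

theorem nls_potential_mul_sq_eq (hp : 2 * p + 2 ≠ 0) (x : ℝ) :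
    (E + V x + c * |f x| ^ (2 * p)) * f x ^ 2 =
      E * f x ^ 2 + V x * f x ^ 2 + c * |f x| ^ (2 * p + 2) := by
  rw [← Real.abs_rpow_mul_sq (f x) (2 * p) hp]
  ring

theorem integrable_nls_potential_mul_sq (hp : 2 * p + 2 ≠ 0)
    (hf2 : Integrable fun x => f x ^ 2) (hfp : Integrable fun x => |f x| ^ (2 * p + 2))
    (hVf : Integrable fun x => V x * f x ^ 2) :
    Integrable fun x => (E + V x + c * |f x| ^ (2 * p)) * f x ^ 2 := by
  simp_rw [nls_potential_mul_sq_eq hp]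
  exact ((hf2.const_mul E).add hVf).add (hfp.const_mul c)

theorem integral_nls_potential_mul_sq (hp : 2 * p + 2 ≠ 0)
    (hf2 : Integrable fun x => f x ^ 2) (hfp : Integrable fun x => |f x| ^ (2 * p + 2))
    (hVf : Integrable fun x => V x * f x ^ 2) :
    ∫ x, (E + V x + c * |f x| ^ (2 * p)) * f x ^ 2 =
      E * (∫ x, f x ^ 2) + (∫ x, V x * f x ^ 2) + c * ∫ x, |f x| ^ (2 * p + 2) := by
  simp_rw [nls_potential_mul_sq_eq hp]
  rw [integral_add (f := fun x => E * f x ^ 2 + V x * f x ^ 2) ((hf2.const_mul E).add hVf)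
      (hfp.const_mul c),
    integral_add (hf2.const_mul E) hVf, integral_const_mul, integral_const_mul]

structure IsDecayingNLSSolution (p σ E : ℝ) (V f : ℝ → ℝ) : Prop where
  contDiff : ContDiff ℝ 2 f
  eq : ∀ x, -(deriv (deriv f) x) + V x * f x + σ * |f x| ^ (2 * p) * f x + E * f x = 0
  integrable_deriv_sq : Integrable fun x => deriv f x ^ 2
  integrable_sq : Integrable fun x => f x ^ 2
  integrable_abs_rpow : Integrable fun x => |f x| ^ (2 * p + 2)
  integrable_potential : Integrable fun x => V x * f x ^ 2
  tendsto_atTop : Tendsto (fun x => f x * deriv f x) atTop (nhds 0)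
  tendsto_atBot : Tendsto (fun x => f x * deriv f x) atBot (nhds 0)

namespace IsDecayingNLSSolution

variable {σ E₀ lam : ℝ} (hf : IsDecayingNLSSolution p σ E V f)
include hf

theorem energy_identity (hp : 2 * p + 2 ≠ 0) :
    (∫ x, deriv f x ^ 2) + (E * (∫ x, f x ^ 2) + (∫ x, V x * f x ^ 2)
      + σ * ∫ x, |f x| ^ (2 * p + 2)) = 0 := by
  have hff'' : ∀ x, f x * deriv (deriv f) x = (E + V x + σ * |f x| ^ (2 * p)) * f x ^ 2 :=
    fun x => by linear_combination -f x * hf.eq x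
  have hint : Integrable fun x => f x * deriv (deriv f) x := by
    simpa only [hff''] using integrable_nls_potential_mul_sq hp hf.integrable_sq
      hf.integrable_abs_rpow hf.integrable_potential
  have hibp := integral_mul_deriv_deriv_eq_neg hf.contDiff hf.integrable_deriv_sq hint
    hf.tendsto_atBot hf.tendsto_atTop
  simp_rw [hff''] at hibp
  rw [integral_nls_potential_mul_sq hp hf.integrable_sq hf.integrable_abs_rpow
    hf.integrable_potential] at hibp
  linarith

/-- The Rayleigh quotient of `ψ_E` for `L₊` is `2pσ I/N`. -/
theorem le_of_rayleigh_linearized (hp : 2 * p + 2 ≠ 0) (hN : 0 < ∫ x, f x ^ 2)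
    (hlam : lam * (∫ x, f x ^ 2) ≤ (∫ x, deriv f x ^ 2) +
      ∫ x, (E + V x + σ * (2 * p + 1) * |f x| ^ (2 * p)) * f x ^ 2) :
    lam ≤ 2 * p * σ * ((∫ x, |f x| ^ (2 * p + 2)) / ∫ x, f x ^ 2) := by
  rw [integral_nls_potential_mul_sq hp hf.integrable_sq hf.integrable_abs_rpow
    hf.integrable_potential] at hlam
  rw [← mul_div_assoc, le_div_iff₀ hN]
  linarith [hf.energy_identity hp]

theorem le_of_rayleigh_schrodinger (hp : 2 * p + 2 ≠ 0) (hN : 0 < ∫ x, f x ^ 2)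
    (hE₀ : -E₀ * (∫ x, f x ^ 2) ≤ (∫ x, deriv f x ^ 2) + ∫ x, V x * f x ^ 2) :
    E ≤ E₀ - σ * ((∫ x, |f x| ^ (2 * p + 2)) / ∫ x, f x ^ 2) := by
  have h : E - E₀ ≤ -σ * (∫ x, |f x| ^ (2 * p + 2)) / ∫ x, f x ^ 2 := by
    rw [le_div_iff₀ hN]
    linarith [hf.energy_identity hp]
  rw [mul_div_assoc] at h
  linarith

end IsDecayingNLSSolution

end StationaryNLS

theorem stmt10_general (p σ E₀ Estar : ℝ) (hp : 0 < p) (hσ : σ < 0)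
    (V : ℝ → ℝ) (ψ : ℝ → ℝ → ℝ) (lam0 : ℝ → ℝ) (Eseq : ℕ → ℝ)
    (hEseqmem : ∀ n, Eseq n ∈ Set.Ioo E₀ Estar)
    (hEseqlim : Tendsto Eseq atTop (nhds Estar))
    -- the branch consists of positive `C²` solutions of the stationary NLS
    (hreg : ∀ E ∈ Set.Ioo E₀ Estar, ContDiff ℝ 2 (ψ E))
    (hsol : ∀ E ∈ Set.Ioo E₀ Estar, ∀ x,
      -(deriv (deriv (ψ E)) x) + V x * ψ E x + σ * |ψ E x| ^ (2 * p) * ψ E x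
        + E * ψ E x = 0)
    (hint1 : ∀ E ∈ Set.Ioo E₀ Estar, Integrable (fun x => (deriv (ψ E) x) ^ 2))
    (hint2 : ∀ E ∈ Set.Ioo E₀ Estar, Integrable (fun x => (ψ E x) ^ 2))
    (hint3 : ∀ E ∈ Set.Ioo E₀ Estar, Integrable (fun x => |ψ E x| ^ (2 * p + 2)))
    (hint4 : ∀ E ∈ Set.Ioo E₀ Estar, Integrable (fun x => V x * (ψ E x) ^ 2))
    (hN : ∀ E ∈ Set.Ioo E₀ Estar, 0 < ∫ x, (ψ E x) ^ 2)
    (hbdry : ∀ E ∈ Set.Ioo E₀ Estar,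
      Tendsto (fun x : ℝ => ψ E x * deriv (ψ E) x) atTop (nhds 0) ∧
      Tendsto (fun x : ℝ => ψ E x * deriv (ψ E) x) atBot (nhds 0))
    -- `λ₀(E)` is the lowest eigenvalue of `L₊`: min-max bound by the Rayleigh
    -- quotient of `ψ_E` itself
    (hlam0Rayleigh : ∀ E ∈ Set.Ioo E₀ Estar,
      lam0 E * (∫ x, (ψ E x) ^ 2) ≤
        (∫ x, (deriv (ψ E) x) ^ 2) +
        ∫ x, (E + V x + σ * (2 * p + 1) * |ψ E x| ^ (2 * p)) * (ψ E x) ^ 2)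
    (hlam0lim : Tendsto (fun n => lam0 (Eseq n)) atTop (nhds 0))
    -- `-E₀` is the lowest eigenvalue of `-∂ₓ² + V` (Rayleigh lower bound)
    (hE₀ : ∀ ξ : ℝ → ℝ, ContDiff ℝ 1 ξ →
      Integrable (fun x => (ξ x) ^ 2) → Integrable (fun x => (deriv ξ x) ^ 2) →
      Integrable (fun x => V x * (ξ x) ^ 2) →
      -E₀ * (∫ x, (ξ x) ^ 2) ≤ (∫ x, (deriv ξ x) ^ 2) + ∫ x, V x * (ξ x) ^ 2) :
    Tendsto (fun n =>
      (∫ x, |ψ (Eseq n) x| ^ (2 * p + 2)) / (∫ x, (ψ (Eseq n) x) ^ 2))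
      atTop (nhds 0) ∧ Estar ≤ E₀ := by
  set Q : ℕ → ℝ := fun n => (∫ x, |ψ (Eseq n) x| ^ (2 * p + 2)) / ∫ x, (ψ (Eseq n) x) ^ 2
  have hp2 : 2 * p + 2 ≠ 0 := by positivity
  have hsolution : ∀ E ∈ Set.Ioo E₀ Estar, IsDecayingNLSSolution p σ E V (ψ E) := fun E hE =>
    ⟨hreg E hE, hsol E hE, hint1 E hE, hint2 E hE, hint3 E hE, hint4 E hE, (hbdry E hE).1,
      (hbdry E hE).2⟩
  have hQ_nonneg : ∀ n, 0 ≤ Q n := fun n => div_nonneg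
    (integral_nonneg fun x => by positivity) (hN _ (hEseqmem n)).le
  have hQ_le : ∀ n, Q n ≤ lam0 (Eseq n) / (2 * p * σ) := fun n => by
    rw [le_div_iff_of_neg (mul_neg_of_pos_of_neg (by positivity) hσ), mul_comm]
    exact (hsolution _ (hEseqmem n)).le_of_rayleigh_linearized hp2 (hN _ (hEseqmem n))
      (hlam0Rayleigh _ (hEseqmem n))
  have hQ : Tendsto Q atTop (nhds 0) := tendsto_of_tendsto_of_tendsto_of_le_of_le
    tendsto_const_nhds (by simpa using hlam0lim.div_const (2 * p * σ)) hQ_nonneg hQ_le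
  refine ⟨hQ, le_of_tendsto_of_tendsto' hEseqlim ?_ fun n =>
    (hsolution _ (hEseqmem n)).le_of_rayleigh_schrodinger hp2 (hN _ (hEseqmem n))
      (hE₀ _ ((hreg _ (hEseqmem n)).of_le (by norm_num)) (hint2 _ (hEseqmem n))
        (hint1 _ (hEseqmem n)) (hint4 _ (hEseqmem n)))⟩
  simpa using tendsto_const_nhds.sub (hQ.const_mul σ)

/-- Let `σ < 0` and `(ψ_E, E)`, `E ∈ (E₀, E_*)`, a branch of positive solutions of the
stationary NLS such that the lowest eigenvalue `λ₀(E)` of `L₊(ψ_E,E)` tends to `0`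
along a sequence `Eₙ → E_*`.  Then `‖ψ_{Eₙ}‖_{2p+2}^{2p+2}/‖ψ_{Eₙ}‖²_{L²} → 0` and
consequently `E_* ≤ E₀`, where `-E₀` is the lowest eigenvalue of `-∂ₓ² + V`. -/
theorem stmt10 (p σ E₀ Estar : ℝ) (hp : 0 < p) (hσ : σ < 0) (hE₀star : E₀ < Estar)
    (V : ℝ → ℝ) (ψ : ℝ → ℝ → ℝ) (lam0 : ℝ → ℝ) (Eseq : ℕ → ℝ)
    (hEseqmem : ∀ n, Eseq n ∈ Set.Ioo E₀ Estar)
    (hEseqlim : Tendsto Eseq atTop (nhds Estar))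
    -- the branch consists of positive `C²` solutions of the stationary NLS
    (hpos : ∀ E ∈ Set.Ioo E₀ Estar, ∀ x, 0 < ψ E x)
    (hreg : ∀ E ∈ Set.Ioo E₀ Estar, ContDiff ℝ 2 (ψ E))
    (hsol : ∀ E ∈ Set.Ioo E₀ Estar, ∀ x,
      -(deriv (deriv (ψ E)) x) + V x * ψ E x + σ * |ψ E x| ^ (2 * p) * ψ E x
        + E * ψ E x = 0)
    (hint1 : ∀ E ∈ Set.Ioo E₀ Estar, Integrable (fun x => (deriv (ψ E) x) ^ 2))
    (hint2 : ∀ E ∈ Set.Ioo E₀ Estar, Integrable (fun x => (ψ E x) ^ 2))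
    (hint3 : ∀ E ∈ Set.Ioo E₀ Estar, Integrable (fun x => |ψ E x| ^ (2 * p + 2)))
    (hint4 : ∀ E ∈ Set.Ioo E₀ Estar, Integrable (fun x => V x * (ψ E x) ^ 2))
    (hN : ∀ E ∈ Set.Ioo E₀ Estar, 0 < ∫ x, (ψ E x) ^ 2)
    (hbdry : ∀ E ∈ Set.Ioo E₀ Estar,
      Tendsto (fun x : ℝ => ψ E x * deriv (ψ E) x) atTop (nhds 0) ∧
      Tendsto (fun x : ℝ => ψ E x * deriv (ψ E) x) atBot (nhds 0))
    -- `λ₀(E)` is the lowest eigenvalue of `L₊`: min-max bound by the Rayleigh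
    -- quotient of `ψ_E` itself
    (hlam0Rayleigh : ∀ E ∈ Set.Ioo E₀ Estar,
      lam0 E * (∫ x, (ψ E x) ^ 2) ≤
        (∫ x, (deriv (ψ E) x) ^ 2) +
        ∫ x, (E + V x + σ * (2 * p + 1) * |ψ E x| ^ (2 * p)) * (ψ E x) ^ 2)
    (hlam0lim : Tendsto (fun n => lam0 (Eseq n)) atTop (nhds 0))
    -- `-E₀` is the lowest eigenvalue of `-∂ₓ² + V` (Rayleigh lower bound)
    (hE₀ : ∀ ξ : ℝ → ℝ, ContDiff ℝ 1 ξ →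
      Integrable (fun x => (ξ x) ^ 2) → Integrable (fun x => (deriv ξ x) ^ 2) →
      Integrable (fun x => V x * (ξ x) ^ 2) →
      -E₀ * (∫ x, (ξ x) ^ 2) ≤ (∫ x, (deriv ξ x) ^ 2) + ∫ x, V x * (ξ x) ^ 2) :
    Tendsto (fun n =>
      (∫ x, |ψ (Eseq n) x| ^ (2 * p + 2)) / (∫ x, (ψ (Eseq n) x) ^ 2))
      atTop (nhds 0) ∧ Estar ≤ E₀ :=
  stmt10_general p σ E₀ Estar hp hσ V ψ lam0 Eseq hEseqmem hEseqlim hreg hsol hint1 hint2 hint3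
    hint4 hN hbdry hlam0Rayleigh hlam0lim hE₀
end
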